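/- (Lemma 5.1, central cell.) Let α > −1, let L : (0,∞) → (0,∞) be slowly varying at 0, continuously differentiable on (0,∞), bounded away from 0 on every interval (u, √2] with u > 0, and satisfy |L′(x)| ≤ C(1 + x^{−1}) for all x ∈ (0,1] and some C > 0. Then for every b₀ ∈ □(0,0) with b₀ ≠ 0, both limits hold: lim_{n→∞} ∫_{□(0,0)} ( ‖x‖^α · L(‖x‖/n)/L(1/n) − ‖b₀‖^α · L(‖b₀‖/n)/L(1/n) )² dx = ∫_{□(0,0)} (‖x‖^α − ‖b₀‖^α)² dx, and lim_{n→∞} ∫_{□(0,0)} ‖x‖^{2α} ( L(‖x‖/n)/L(1/n) − L(‖b₀‖/n)/L(1/n) )² dx = 0. -/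

import Mathlib

/-!
Write `r_n(δ) = L (δ / n) / L (1 / n)`. Slow variation gives `r_n(δ) → 1` for every `δ > 0`, so
both integrands converge pointwise. To dominate them one needs Potter's bound
`r_n(δ) ≤ e^ε δ^(-ε)` for `δ ∈ (0, 1]` and large `n`: in the variable `u t = log L (e^(-t))` slow
variation says `u (t + s) - u t → 0`, a measure-theoretic argument makes this uniform for
`s ∈ [0, 1]`, and chaining unit steps gives `|u (t + s) - u t| ≤ ε (s + 1)`. With `ε` small,
`‖x‖ ^ (2 (α - ε))` is still integrable near `0` in the plane (since `α > -1`), and dominated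
convergence yields both limits.
-/

open MeasureTheory Filter Set Real

noncomputable section

abbrev E2 : Type := EuclideanSpace ℝ (Fin 2)

/-- The closed square of side length `r` centred at `c`. -/
def sqC (c : E2) (r : ℝ) : Set E2 :=
  {x : E2 | |x 0 - c 0| ≤ r / 2 ∧ |x 1 - c 1| ≤ r / 2}

/-- `L` is slowly varying at `0`. -/
def SlowlyVaryingAtZero (L : ℝ → ℝ) : Prop :=
  ∀ δ : ℝ, 0 < δ → Tendsto (fun x => L (δ * x) / L x) (nhdsWithin 0 (Set.Ioi 0)) (nhds 1)

open Topology Metric Module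

theorem eventually_forall_Icc_abs_add_sub_le {u : ℝ → ℝ} (hu : Continuous u)
    (hlim : ∀ s, Tendsto (fun t ↦ u (t + s) - u t) atTop (𝓝 0)) {ε : ℝ} (hε : 0 < ε) :
    ∀ᶠ t in atTop, ∀ s ∈ Icc (0 : ℝ) 1, |u (t + s) - u t| ≤ ε := by
  -- The closed sets `E k` exhaust `[0, 2]`, so one has measure `> 3/2` and meets its translate
  -- by any `s ∈ [0, 1]` inside `[-1, 2]`; a common point `q` links `u (t + s)` and `u t`
  -- through `u (t + s + q)`.
  let E : ℕ → Set ℝ := fun k ↦ Icc 0 2 ∩ ⋂ t ∈ Ici (k : ℝ), {s | |u (t + s) - u t| ≤ ε / 2}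
  have hE_closed (k : ℕ) : IsClosed (E k) :=
    isClosed_Icc.inter <| isClosed_biInter fun t _ ↦
      isClosed_le (by fun_prop) continuous_const
  have hE_mono : Monotone E := fun k k' hk s hs ↦
    ⟨hs.1, mem_iInter₂.2 fun t ht ↦ mem_iInter₂.1 hs.2 t
      (le_trans (by exact_mod_cast hk) (mem_Ici.1 ht))⟩
  have hE_cover : Icc (0 : ℝ) 2 ⊆ ⋃ k, E k := by
    intro s hs
    obtain ⟨T, hT⟩ := eventually_atTop.1 <|
      (hlim s).eventually (Metric.closedBall_mem_nhds 0 (half_pos hε))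
    refine mem_iUnion.2 ⟨⌈T⌉₊, hs, mem_iInter₂.2 fun t ht ↦ ?_⟩
    simpa [Real.dist_eq] using hT t ((Nat.le_ceil T).trans ht)
  obtain ⟨k, hk⟩ : ∃ k, ENNReal.ofReal (3 / 2) < volume (E k) := by
    have : ENNReal.ofReal (3 / 2) < ⨆ k, volume (E k) := by
      rw [← hE_mono.measure_iUnion]
      refine lt_of_lt_of_le ?_ (measure_mono hE_cover)
      rw [Real.volume_Icc, ENNReal.ofReal_lt_ofReal_iff] <;> norm_num
    exact lt_iSup_iff.1 this
  refine eventually_atTop.2 ⟨k, fun t ht s hs ↦ ?_⟩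
  obtain ⟨q, hq, hqs⟩ : (E k ∩ (· + s) ⁻¹' E k).Nonempty := by
    refine nonempty_inter_of_measure_lt_add volume
      ((hE_closed k).measurableSet.preimage (measurable_add_const s))
      (u := Icc (-1) 2) (fun x hx ↦ ⟨by linarith [hx.1.1], hx.1.2⟩)
      (fun x hx ↦ ⟨by linarith [hx.1.1, hs.2], by linarith [hx.1.2, hs.1]⟩) ?_
    rw [measure_preimage_add_right, Real.volume_Icc]
    calc ENNReal.ofReal (2 - -1) = ENNReal.ofReal (3 / 2) + ENNReal.ofReal (3 / 2) := by
          rw [← ENNReal.ofReal_add] <;> norm_num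
      _ < volume (E k) + volume (E k) := ENNReal.add_lt_add hk hk
  have h₁ : |u (t + (q + s)) - u t| ≤ ε / 2 := mem_iInter₂.1 hqs.2 t ht
  have h₂ : |u (t + s + q) - u (t + s)| ≤ ε / 2 :=
    mem_iInter₂.1 hq.2 (t + s) (by simp only [mem_Ici] at ht ⊢; linarith [hs.1])
  rw [show t + (q + s) = t + s + q by ring] at h₁
  calc |u (t + s) - u t| = |(u (t + s + q) - u t) - (u (t + s + q) - u (t + s))| := by ring_nf
    _ ≤ ε / 2 + ε / 2 := (abs_sub _ _).trans (add_le_add h₁ h₂)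
    _ = ε := add_halves ε

theorem abs_add_sub_le_of_forall_Icc {u : ℝ → ℝ} {ε T : ℝ} (hε : 0 ≤ ε)
    (h : ∀ t ≥ T, ∀ s ∈ Icc (0 : ℝ) 1, |u (t + s) - u t| ≤ ε) {t s : ℝ} (ht : T ≤ t)
    (hs : 0 ≤ s) : |u (t + s) - u t| ≤ ε * (s + 1) := by
  have key (m : ℕ) : ∀ t ≥ T, ∀ s ∈ Icc (0 : ℝ) (m + 1), |u (t + s) - u t| ≤ ε * (m + 1) := by
    induction m with
    | zero => simpa using h
    | succ m ih =>
      intro t ht s hs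
      push_cast at hs ⊢
      rcases le_or_gt s 1 with hs1 | hs1
      · nlinarith [h t ht s ⟨hs.1, hs1⟩, (m.cast_nonneg : (0 : ℝ) ≤ m)]
      have h₁ := ih (t + 1) (by linarith) (s - 1) ⟨by linarith, by linarith [hs.2]⟩
      have h₂ := h t ht 1 ⟨zero_le_one, le_rfl⟩
      rw [show t + 1 + (s - 1) = t + s by ring] at h₁
      calc |u (t + s) - u t| = |(u (t + s) - u (t + 1)) + (u (t + 1) - u t)| := by ring_nf
        _ ≤ ε * (m + 1) + ε := (abs_add_le _ _).trans (add_le_add h₁ h₂)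
        _ = ε * (m + 1 + 1) := by ring
  refine (key ⌊s⌋₊ t ht s ⟨hs, (Nat.lt_floor_add_one s).le⟩).trans ?_
  gcongr
  exact Nat.floor_le hs

namespace SlowlyVaryingAtZero

variable {L : ℝ → ℝ}

theorem tendsto_log_comp_exp_add_sub (hSV : SlowlyVaryingAtZero L)
    (hLpos : ∀ x, 0 < x → 0 < L x) (s : ℝ) :
    Tendsto (fun t ↦ log (L (exp (-(t + s)))) - log (L (exp (-t)))) atTop (𝓝 0) := by
  have hexp : Tendsto (fun t : ℝ ↦ exp (-t)) atTop (𝓝[>] 0) :=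
    tendsto_nhdsWithin_of_tendsto_nhds_of_eventually_within _
      tendsto_exp_neg_atTop_nhds_zero (.of_forall fun t ↦ exp_pos _)
  have := ((continuousAt_log one_ne_zero).tendsto.comp ((hSV _ (exp_pos (-s))).comp hexp))
  rw [log_one] at this
  refine this.congr fun t ↦ ?_
  rw [Function.comp_apply, Function.comp_apply, ← exp_add, log_div (hLpos _ (exp_pos _)).ne'
    (hLpos _ (exp_pos _)).ne', neg_add, add_comm]

theorem eventually_div_le_mul_rpow_neg (hSV : SlowlyVaryingAtZero L)
    (hLpos : ∀ x, 0 < x → 0 < L x) (hL : ContinuousOn L (Ioi 0)) {ε : ℝ} (hε : 0 < ε) :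
    ∀ᶠ x in 𝓝[>] 0, ∀ δ ∈ Ioc (0 : ℝ) 1, L (δ * x) / L x ≤ exp ε * δ ^ (-ε) := by
  set u : ℝ → ℝ := fun t ↦ log (L (exp (-t)))
  have hu : Continuous u :=
    (hL.comp_continuous (by fun_prop) fun t ↦ exp_pos (-t)).log
      fun t ↦ (hLpos _ (exp_pos _)).ne'
  obtain ⟨T, hT⟩ := eventually_atTop.1
    (eventually_forall_Icc_abs_add_sub_le hu (tendsto_log_comp_exp_add_sub hSV hLpos) hε)
  have hlog : Tendsto (fun x ↦ -log x) (𝓝[>] 0) atTop :=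
    tendsto_neg_atBot_atTop.comp tendsto_log_nhdsGT_zero
  filter_upwards [hlog.eventually_ge_atTop T, self_mem_nhdsWithin] with x hxT hx δ hδ
  have hδx : 0 < δ * x := mul_pos hδ.1 hx
  have hbound := abs_add_sub_le_of_forall_Icc hε.le hT hxT (neg_nonneg.2 (log_nonpos hδ.1.le hδ.2))
  have hu_δx : u (-log x + -log δ) = log (L (δ * x)) := by
    simp only [u, neg_add, neg_neg, exp_add, exp_log hx, exp_log hδ.1, mul_comm x δ]
  have hu_x : u (-log x) = log (L x) := by simp only [u, neg_neg, exp_log hx]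
  rw [hu_δx, hu_x, ← log_div (hLpos _ hδx).ne' (hLpos _ hx).ne'] at hbound
  calc L (δ * x) / L x = exp (log (L (δ * x) / L x)) :=
        (exp_log (div_pos (hLpos _ hδx) (hLpos _ hx))).symm
    _ ≤ exp (ε * (-log δ + 1)) := exp_le_exp.2 ((le_abs_self _).trans hbound)
    _ = exp ε * δ ^ (-ε) := by rw [rpow_def_of_pos hδ.1, ← exp_add]; ring_nf

theorem tendsto_one_div_natCast_nhdsGT_zero :
    Tendsto (fun n : ℕ ↦ 1 / (n : ℝ)) atTop (𝓝[>] 0) :=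
  (tendsto_inv_atTop_nhdsGT_zero.comp tendsto_natCast_atTop_atTop).congr fun _ ↦ (one_div _).symm

theorem tendsto_div_natCast (hSV : SlowlyVaryingAtZero L) {δ : ℝ} (hδ : 0 < δ) :
    Tendsto (fun n : ℕ ↦ L (δ / n) / L (1 / n)) atTop (𝓝 1) := by
  simpa only [Function.comp_def, mul_one_div] using
    (hSV δ hδ).comp tendsto_one_div_natCast_nhdsGT_zero

theorem eventually_div_natCast_mem_Ioc (hSV : SlowlyVaryingAtZero L)
    (hLpos : ∀ x, 0 < x → 0 < L x) (hL : ContinuousOn L (Ioi 0)) {ε : ℝ} (hε : 0 < ε) :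
    ∀ᶠ n : ℕ in atTop, ∀ δ ∈ Ioc (0 : ℝ) 1,
      L (δ / n) / L (1 / n) ∈ Ioc 0 (exp ε * δ ^ (-ε)) := by
  filter_upwards [tendsto_one_div_natCast_nhdsGT_zero.eventually
    (hSV.eventually_div_le_mul_rpow_neg hLpos hL hε),
    tendsto_one_div_natCast_nhdsGT_zero.eventually self_mem_nhdsWithin] with n hPotter hn δ hδ
  rw [← mul_one_div δ]
  exact ⟨div_pos (hLpos _ (mul_pos hδ.1 hn)) (hLpos _ hn), hPotter δ hδ⟩

end SlowlyVaryingAtZero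

theorem sub_sq_le_sq_add_sq {a a' b b' : ℝ} (ha : 0 ≤ a) (ha' : a ≤ a') (hb : 0 ≤ b)
    (hb' : b ≤ b') : (a - b) ^ 2 ≤ a' ^ 2 + b' ^ 2 := by
  nlinarith [mul_nonneg ha hb]

theorem rpow_two_mul {x : ℝ} (hx : 0 ≤ x) (y : ℝ) : x ^ (2 * y) = (x ^ y) ^ 2 := by
  rw [mul_comm]
  exact_mod_cast rpow_mul_natCast hx y 2

section HaarMeasure

variable {E : Type*} [NormedAddCommGroup E] [NormedSpace ℝ E] [FiniteDimensional ℝ E]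
  [Nontrivial E] [MeasurableSpace E] [BorelSpace E] {μ : Measure E} [μ.IsAddHaarMeasure]

theorem integrableOn_norm_rpow {p : ℝ} (hp : -(finrank ℝ E : ℝ) < p) {s : Set E}
    (hs : Bornology.IsBounded s) : IntegrableOn (fun x ↦ ‖x‖ ^ p) s μ := by
  have hloc : LocallyIntegrable (fun x : E ↦ ‖x‖ ^ p) μ :=
    locallyIntegrable_of_norm_le_rpow (C := 1) (α := -p) finrank_pos (by linarith)
      (.of_forall fun x ↦ by
        rw [one_mul, neg_neg, norm_of_nonneg (rpow_nonneg (norm_nonneg x) p)])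
      (measurable_norm.pow_const p).aestronglyMeasurable
  exact (hloc.integrableOn_isCompact hs.isCompact_closure).mono_set subset_closure

theorem aestronglyMeasurable_of_continuousOn_compl_zero {F : Type*} [TopologicalSpace F]
    [TopologicalSpace.PseudoMetrizableSpace F] {f : E → F} (hf : ContinuousOn f {0}ᶜ) :
    AEStronglyMeasurable f μ := by
  simpa only [restrict_compl_singleton] using
    hf.aestronglyMeasurable (μ := μ) (measurableSet_singleton 0).compl

theorem SlowlyVaryingAtZero.tendsto_integral_sq_sub {L : ℝ → ℝ} (hSV : SlowlyVaryingAtZero L)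
    (hLpos : ∀ x, 0 < x → 0 < L x) (hL : ContinuousOn L (Ioi 0))
    {α : ℝ} (hα : -(finrank ℝ E : ℝ) < 2 * α) {s : Set E} (hs : MeasurableSet s)
    (hs₁ : s ⊆ closedBall 0 1) {c : ℝ} (hc : c ∈ Ioc (0 : ℝ) 1) {ψ : E → ℝ}
    (hψ₀ : ∀ x, 0 ≤ ψ x) (hψm : AEStronglyMeasurable ψ μ)
    (hψ : IntegrableOn (fun x ↦ ψ x ^ 2) s μ) :
    Tendsto (fun n : ℕ ↦ ∫ x in s,
        (‖x‖ ^ α * (L (‖x‖ / n) / L (1 / n)) - ψ x * (L (c / n) / L (1 / n))) ^ 2 ∂μ)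
      atTop (𝓝 (∫ x in s, (‖x‖ ^ α - ψ x) ^ 2 ∂μ)) := by
  obtain ⟨ε, hε, hεα⟩ : ∃ ε > 0, -(finrank ℝ E : ℝ) < 2 * (α - ε) :=
    ⟨(2 * α + finrank ℝ E) / 4, by linarith, by linarith⟩
  set A := exp ε
  have hae_ne : ∀ᵐ x ∂μ.restrict s, x ≠ 0 :=
    ae_restrict_of_ae (compl_mem_ae_iff.2 (measure_singleton 0))
  refine tendsto_integral_filter_of_dominated_convergence
    (fun x ↦ (A * ‖x‖ ^ (α - ε)) ^ 2 + (A * c ^ (-ε) * ψ x) ^ 2) ?_ ?_ ?_ ?_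
  · filter_upwards [eventually_ge_atTop 1] with n hn
    have hcont : ContinuousOn (fun x : E ↦ ‖x‖ ^ α * (L (‖x‖ / n) / L (1 / n))) {0}ᶜ := by
      refine (continuous_norm.continuousOn.rpow_const fun x hx ↦
        Or.inl (norm_ne_zero_iff.2 hx)).mul
          ((hL.comp (continuous_norm.div_const _).continuousOn fun x hx ↦ ?_).div_const _)
      exact div_pos (norm_pos_iff.2 hx) (by exact_mod_cast hn)
    exact (((aestronglyMeasurable_of_continuousOn_compl_zero hcont).sub
      (hψm.mul_const _)).pow 2).restrict
  · filter_upwards [hSV.eventually_div_natCast_mem_Ioc hLpos hL hε] with n hn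
    filter_upwards [hae_ne, ae_restrict_mem hs] with x hx hxs
    have hx₀ : 0 < ‖x‖ := norm_pos_iff.2 hx
    obtain ⟨hr₀, hr⟩ := hn ‖x‖ ⟨hx₀, mem_closedBall_zero_iff.1 (hs₁ hxs)⟩
    obtain ⟨hrc₀, hrc⟩ := hn c hc
    rw [norm_of_nonneg (sq_nonneg _)]
    refine sub_sq_le_sq_add_sq (by positivity) ?_ (mul_nonneg (hψ₀ x) hrc₀.le) ?_
    · calc _ ≤ ‖x‖ ^ α * (A * ‖x‖ ^ (-ε)) := by gcongr
        _ = A * ‖x‖ ^ (α - ε) := by rw [sub_eq_add_neg, rpow_add hx₀]; ring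
    · calc _ ≤ ψ x * (A * c ^ (-ε)) := mul_le_mul_of_nonneg_left hrc (hψ₀ x)
        _ = A * c ^ (-ε) * ψ x := mul_comm _ _
  · have hpow : IntegrableOn (fun x ↦ ‖x‖ ^ (2 * (α - ε))) s μ :=
      integrableOn_norm_rpow hεα (isBounded_closedBall.subset hs₁)
    refine IntegrableOn.congr_fun
      ((hpow.const_mul (A ^ 2)).add (hψ.const_mul ((A * c ^ (-ε)) ^ 2))) (fun x _ ↦ ?_) hs
    simp only [Pi.add_apply, rpow_two_mul (norm_nonneg x)]
    ring
  · filter_upwards [hae_ne] with x hx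
    simpa using (((hSV.tendsto_div_natCast (norm_pos_iff.2 hx)).const_mul (‖x‖ ^ α)).sub
      ((hSV.tendsto_div_natCast hc.1).const_mul (ψ x))).pow 2

end HaarMeasure

theorem isClosed_sqC (c : E2) (r : ℝ) : IsClosed (sqC c r) := by
  have (i : Fin 2) : IsClosed {x : E2 | |x i - c i| ≤ r / 2} :=
    isClosed_le ((PiLp.continuous_apply 2 _ i).sub continuous_const).abs continuous_const
  exact (this 0).inter (this 1)

theorem sqC_subset_closedBall (c : E2) (r : ℝ) : sqC c r ⊆ closedBall c r := by
  rintro x ⟨h₀, h₁⟩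
  have hr : 0 ≤ r := by linarith [abs_nonneg (x 0 - c 0)]
  have hsq : ‖x - c‖ ^ 2 ≤ r ^ 2 := by
    rw [EuclideanSpace.real_norm_sq_eq, Fin.sum_univ_two]
    simp only [PiLp.sub_apply]
    nlinarith [sq_abs (x 0 - c 0), sq_abs (x 1 - c 1), abs_nonneg (x 0 - c 0),
      abs_nonneg (x 1 - c 1)]
  rw [mem_closedBall, dist_eq_norm]
  exact (sq_le_sq₀ (norm_nonneg _) hr).1 hsq

theorem stmt6_general (α : ℝ) (hα : -1 < α)
    (L : ℝ → ℝ) (hLpos : ∀ x : ℝ, 0 < x → 0 < L x)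
    (hSV : SlowlyVaryingAtZero L)
    (hA1 : ContDiffOn ℝ 1 L (Set.Ioi 0))
    (b₀ : E2) (hb₀ : b₀ ∈ sqC 0 1) (hb₀0 : b₀ ≠ 0) :
    Tendsto (fun n : ℕ => ∫ x in sqC 0 1,
        (‖x‖ ^ α * (L (‖x‖ / n) / L (1 / n)) - ‖b₀‖ ^ α * (L (‖b₀‖ / n) / L (1 / n))) ^ 2)
      atTop (nhds (∫ x in sqC 0 1, (‖x‖ ^ α - ‖b₀‖ ^ α) ^ 2)) ∧
    Tendsto (fun n : ℕ => ∫ x in sqC 0 1,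
        ‖x‖ ^ (2 * α) * (L (‖x‖ / n) / L (1 / n) - L (‖b₀‖ / n) / L (1 / n)) ^ 2)
      atTop (nhds 0) := by
  have hdim : -(finrank ℝ E2 : ℝ) < 2 * α := by
    rw [finrank_euclideanSpace_fin]; push_cast; linarith
  have hs₁ := sqC_subset_closedBall 0 1
  have hb : ‖b₀‖ ∈ Ioc (0 : ℝ) 1 := ⟨norm_pos_iff.2 hb₀0, by simpa using hs₁ hb₀⟩
  have key (ψ : E2 → ℝ) := hSV.tendsto_integral_sq_sub (μ := volume) (ψ := ψ)
    hLpos hA1.continuousOn hdim (isClosed_sqC 0 1).measurableSet hs₁ hb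
  constructor
  · exact key _ (fun _ ↦ rpow_nonneg (norm_nonneg _) _) aestronglyMeasurable_const
      (integrableOn_const ((measure_mono hs₁).trans_lt measure_closedBall_lt_top).ne)
  · have hψ : IntegrableOn (fun x : E2 ↦ (‖x‖ ^ α) ^ 2) (sqC 0 1) :=
      (integrableOn_norm_rpow hdim (isBounded_closedBall.subset hs₁)).congr_fun
        (fun x _ ↦ rpow_two_mul (norm_nonneg x) α) (isClosed_sqC 0 1).measurableSet
    have hintegrand (n : ℕ) (x : E2) :
        (‖x‖ ^ α * (L (‖x‖ / n) / L (1 / n)) - ‖x‖ ^ α * (L (‖b₀‖ / n) / L (1 / n))) ^ 2 =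
          ‖x‖ ^ (2 * α) * (L (‖x‖ / n) / L (1 / n) - L (‖b₀‖ / n) / L (1 / n)) ^ 2 := by
      rw [rpow_two_mul (norm_nonneg x), ← mul_sub, mul_pow]
    simpa only [hintegrand, sub_self, ne_eq, OfNat.ofNat_ne_zero, not_false_eq_true, zero_pow,
      integral_zero] using key _ (fun x ↦ rpow_nonneg (norm_nonneg x) α)
        (measurable_norm.pow_const α).aestronglyMeasurable hψ

theorem stmt6 (α : ℝ) (hα : -1 < α)
    (L : ℝ → ℝ) (hLpos : ∀ x : ℝ, 0 < x → 0 < L x)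
    (hSV : SlowlyVaryingAtZero L)
    (hA1 : ContDiffOn ℝ 1 L (Set.Ioi 0))
    (hA1' : ∀ u : ℝ, 0 < u → ∃ ε > (0 : ℝ), ∀ x ∈ Set.Ioc u (Real.sqrt 2), ε ≤ L x)
    (C : ℝ) (hC : 0 < C)
    (hA4 : ∀ x ∈ Set.Ioc (0 : ℝ) 1, |deriv L x| ≤ C * (1 + x⁻¹))
    (b₀ : E2) (hb₀ : b₀ ∈ sqC 0 1) (hb₀0 : b₀ ≠ 0) :
    Tendsto (fun n : ℕ => ∫ x in sqC 0 1,
        (‖x‖ ^ α * (L (‖x‖ / n) / L (1 / n)) - ‖b₀‖ ^ α * (L (‖b₀‖ / n) / L (1 / n))) ^ 2)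
      atTop (nhds (∫ x in sqC 0 1, (‖x‖ ^ α - ‖b₀‖ ^ α) ^ 2)) ∧
    Tendsto (fun n : ℕ => ∫ x in sqC 0 1,
        ‖x‖ ^ (2 * α) * (L (‖x‖ / n) / L (1 / n) - L (‖b₀‖ / n) / L (1 / n)) ^ 2)
      atTop (nhds 0) :=
  stmt6_general α hα L hLpos hSV hA1 b₀ hb₀ hb₀0
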